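/- arXiv:2505.05135 — 5 statements merged into one kernel-verified Lean document; each statement's English description precedes it below -/
import Mathlib

section
/- Let N ≥ 1 and m ≥ 1 be integers, and let ρ = ((a,b),(c,d)) be a 2×2 integer matrix with gcd(a,b,c,d) = 1, determinant ad − bc = m, gcd(a,N) = 1, and N ∣ c. Then there exist a matrix γ ∈ SL₂(ℤ) whose lower-left entry is divisible by N (i.e. γ ∈ Γ₀(N)) and a matrix ω ∈ Ω(m) such that ρ = γ·ω. -/
/-- `InOmega m ω` : `ω` is an integer matrix `((a,b),(0,d))` with `a, d > 0`,
`a * d = m`, `gcd(a,b,d) = 1` and `0 ≤ b < d`, i.e. `ω ∈ Ω(m)`. -/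
def InOmega (m : ℤ) (ω : Matrix (Fin 2) (Fin 2) ℤ) : Prop :=
  ω 1 0 = 0 ∧ 0 < ω 0 0 ∧ 0 < ω 1 1 ∧ ω 0 0 * ω 1 1 = m ∧
    Int.gcd (ω 0 0) (Int.gcd (ω 0 1) (ω 1 1)) = 1 ∧ 0 ≤ ω 0 1 ∧ ω 0 1 < ω 1 1

/-!
Left multiplication by `SL₂(ℤ)` brings `ρ` to upper triangular form: if `g = gcd(a, c)` and
`(a, c) = g (a', c')` with `u a' + v c' = 1`, then `γ = ((a', -v), (c', u))` has determinant one
and `γ⁻¹ ρ = ((g, *), (0, *))`. A translation `((1, q), (0, 1))` then reduces the upper right entry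
modulo the lower right one, which is positive because the determinant `m` is. A common divisor
of the entries of the resulting `ω` divides those of `ρ = γ ω`, so `ω` is primitive and lies in
`Ω(m)`; and `ω 0 0 ∣ a` is prime to `N`, so `N ∣ c = γ 1 0 * ω 0 0` forces `N ∣ γ 1 0`.
-/

open Matrix
open scoped MatrixGroups

lemma Matrix.dvd_mul_apply_of_forall_dvd {l m n R : Type*} [Fintype m] [CommSemiring R] {k : R}
    (A : Matrix l m R) {B : Matrix m n R} (hB : ∀ i j, k ∣ B i j) (i : l) (j : n) :
    k ∣ (A * B) i j :=
  Finset.dvd_sum fun l _ => (hB l j).mul_left _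

lemma exists_SL2_mul_upperTriangular (ρ : Matrix (Fin 2) (Fin 2) ℤ)
    (hg : 0 < Int.gcd (ρ 0 0) (ρ 1 0)) :
    ∃ (γ : SL(2, ℤ)) (ω : Matrix (Fin 2) (Fin 2) ℤ), ω 1 0 = 0 ∧ 0 < ω 0 0 ∧
      ρ = (γ : Matrix (Fin 2) (Fin 2) ℤ) * ω := by
  obtain ⟨a', c', hcop, ha, hc⟩ := Int.exists_gcd_one hg
  obtain ⟨u, v, huv⟩ := Int.isCoprime_iff_gcd_eq_one.mpr hcop
  refine ⟨⟨!![a', -v; c', u], by simp [det_fin_two]; linear_combination huv⟩,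
    !![(Int.gcd (ρ 0 0) (ρ 1 0) : ℤ), u * ρ 0 1 + v * ρ 1 1; 0, a' * ρ 1 1 - c' * ρ 0 1],
    rfl, by simpa using hg, ?_⟩
  ext i j
  fin_cases i <;> fin_cases j <;> simp [mul_apply, Fin.sum_univ_two]
  · linear_combination ha
  · linear_combination - ρ 0 1 * huv
  · linear_combination hc
  · linear_combination - ρ 1 1 * huv

lemma exists_SL2_mul_upperRight_reduced (ω : Matrix (Fin 2) (Fin 2) ℤ) (h10 : ω 1 0 = 0)
    (h11 : 0 < ω 1 1) :
    ∃ (γ : SL(2, ℤ)) (ω' : Matrix (Fin 2) (Fin 2) ℤ), ω' 1 0 = 0 ∧ ω' 0 0 = ω 0 0 ∧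
      ω' 1 1 = ω 1 1 ∧ 0 ≤ ω' 0 1 ∧ ω' 0 1 < ω' 1 1 ∧
      ω = (γ : Matrix (Fin 2) (Fin 2) ℤ) * ω' := by
  refine ⟨⟨!![1, ω 0 1 / ω 1 1; 0, 1], by simp [det_fin_two]⟩,
    !![ω 0 0, ω 0 1 % ω 1 1; 0, ω 1 1], rfl, rfl, rfl, by simpa using Int.emod_nonneg _ h11.ne',
    by simpa using Int.emod_lt_of_pos _ h11, ?_⟩
  ext i j
  fin_cases i <;> fin_cases j <;> simp [mul_apply, Fin.sum_univ_two, h10]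
  linear_combination (Int.mul_ediv_add_emod (ω 0 1) (ω 1 1)).symm

lemma gcd_upperTriangular_eq_one_of_eq_mul {ρ γ ω : Matrix (Fin 2) (Fin 2) ℤ} (hρ : ρ = γ * ω)
    (h10 : ω 1 0 = 0)
    (hprim : Int.gcd (Int.gcd (ρ 0 0) (ρ 0 1)) (Int.gcd (ρ 1 0) (ρ 1 1)) = 1) :
    Int.gcd (ω 0 0) (Int.gcd (ω 0 1) (ω 1 1)) = 1 := by
  set k := Int.gcd (ω 0 0) (Int.gcd (ω 0 1) (ω 1 1))
  have hkω : ∀ i j, (k : ℤ) ∣ ω i j := by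
    have h00 : (k : ℤ) ∣ ω 0 0 := Int.gcd_dvd_left _ _
    have h0111 : (k : ℤ) ∣ Int.gcd (ω 0 1) (ω 1 1) := Int.gcd_dvd_right _ _
    intro i j
    fin_cases i <;> fin_cases j
    · exact h00
    · exact h0111.trans (Int.gcd_dvd_left _ _)
    · simp [h10]
    · exact h0111.trans (Int.gcd_dvd_right _ _)
  have hkρ : ∀ i j, (k : ℤ) ∣ ρ i j := hρ ▸ γ.dvd_mul_apply_of_forall_dvd hkω
  have hk := Int.dvd_coe_gcd (Int.dvd_coe_gcd (hkρ 0 0) (hkρ 0 1))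
    (Int.dvd_coe_gcd (hkρ 1 0) (hkρ 1 1))
  rw [hprim] at hk
  exact Nat.eq_one_of_dvd_one (by exact_mod_cast hk)

lemma dvd_lowerLeft_of_eq_mul {N : ℤ} {ρ γ ω : Matrix (Fin 2) (Fin 2) ℤ} (hρ : ρ = γ * ω)
    (h10 : ω 1 0 = 0) (ha : IsCoprime (ρ 0 0) N) (hc : N ∣ ρ 1 0) : N ∣ γ 1 0 := by
  have hρ00 : ρ 0 0 = γ 0 0 * ω 0 0 := by simp [hρ, mul_apply, Fin.sum_univ_two, h10]
  have hρ10 : ρ 1 0 = γ 1 0 * ω 0 0 := by simp [hρ, mul_apply, Fin.sum_univ_two, h10]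
  have hω00 : IsCoprime N (ω 0 0) :=
    (ha.of_isCoprime_of_dvd_left (Dvd.intro_left _ hρ00.symm)).symm
  exact hω00.dvd_of_dvd_mul_right (hρ10 ▸ hc)

theorem stmt0_general (N m : ℤ) (hm : 1 ≤ m)
    (ρ : Matrix (Fin 2) (Fin 2) ℤ)
    (hprim : Int.gcd (Int.gcd (ρ 0 0) (ρ 0 1)) (Int.gcd (ρ 1 0) (ρ 1 1)) = 1)
    (hdet : ρ.det = m)
    (ha : Int.gcd (ρ 0 0) N = 1)
    (hc : N ∣ ρ 1 0) :
    ∃ γ ω : Matrix (Fin 2) (Fin 2) ℤ,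
      γ.det = 1 ∧ N ∣ γ 1 0 ∧ InOmega m ω ∧ ρ = γ * ω := by
  have hg : 0 < Int.gcd (ρ 0 0) (ρ 1 0) := by
    refine Int.gcd_pos_iff.mpr (not_and_or.mp fun h => ?_)
    simp [det_fin_two, h.1, h.2] at hdet
    omega
  obtain ⟨γ₁, ω₁, h₁10, h₁00, hρ₁⟩ := exists_SL2_mul_upperTriangular ρ hg
  have hdet₁ : ω₁ 0 0 * ω₁ 1 1 = m := by
    rw [← hdet, hρ₁, det_mul, γ₁.det_coe, one_mul, det_fin_two, h₁10]; ring
  have h₁11 : 0 < ω₁ 1 1 := pos_of_mul_pos_right (by omega : 0 < ω₁ 0 0 * ω₁ 1 1) h₁00.le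
  obtain ⟨γ₂, ω, h10, h00, h11, h01, h01', hρ₂⟩ :=
    exists_SL2_mul_upperRight_reduced ω₁ h₁10 h₁11
  have hρ : ρ = ((γ₁ * γ₂ : SL(2, ℤ)) : Matrix (Fin 2) (Fin 2) ℤ) * ω := by
    rw [hρ₁, hρ₂, Matrix.SpecialLinearGroup.coe_mul, Matrix.mul_assoc]
  refine ⟨_, ω, (γ₁ * γ₂).det_coe, dvd_lowerLeft_of_eq_mul hρ h10
    (Int.isCoprime_iff_gcd_eq_one.mpr ha) hc, ⟨h10, h00 ▸ h₁00, h11 ▸ h₁11,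
    by rw [h00, h11, hdet₁], gcd_upperTriangular_eq_one_of_eq_mul hρ h10 hprim, h01, h01'⟩, hρ⟩

theorem stmt0 (N m : ℤ) (hN : 1 ≤ N) (hm : 1 ≤ m)
    (ρ : Matrix (Fin 2) (Fin 2) ℤ)
    (hprim : Int.gcd (Int.gcd (ρ 0 0) (ρ 0 1)) (Int.gcd (ρ 1 0) (ρ 1 1)) = 1)
    (hdet : ρ.det = m)
    (ha : Int.gcd (ρ 0 0) N = 1)
    (hc : N ∣ ρ 1 0) :
    ∃ γ ω : Matrix (Fin 2) (Fin 2) ℤ,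
      γ.det = 1 ∧ N ∣ γ 1 0 ∧ InOmega m ω ∧ ρ = γ * ω :=
  stmt0_general N m hm ρ hprim hdet ha hc
end

section
/- Let t, n be integers, N ≥ 1 an integer, and c, d integers. Define ρ = ((cNt + d, −cNn), (cN, d)). Let p be a prime number such that n·N²·c² + t·N·c·d + d² = p, and suppose p ≠ 2, p ∤ N, p ∤ t, and p ∤ (t² − 4n). Then the matrix ρ² is primitive, i.e. the greatest common divisor of its four entries is 1. -/
/-!
Since `ρ` has trace `τ = cNt + 2d` and determinant `p`, a prime `q` dividing every entry of `ρ²`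
makes `ρ` nilpotent mod `q`, so `q` divides both `τ` and `p`; hence `p ∣ τ`. The identity
`τ² - (t² - 4n)(Nc)² = 4p` then forces `p ∣ Nc`, and `p ∣ c` is impossible because `p` is the
value of the form `nN²·c² + tN·cd + d²`, which would then be divisible by `p²`.
-/

/-- The matrix `ρ = ((cNt + d, −cNn), (cN, d))`. -/
def rho (t n N c d : ℤ) : Matrix (Fin 2) (Fin 2) ℤ :=
  !![c * N * t + d, -(c * N * n); c * N, d]

lemma trace_rho (t n N c d : ℤ) : (rho t n N c d).trace = c * N * t + 2 * d := by
  simp only [rho, Matrix.trace_fin_two_of]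
  ring

lemma det_rho (t n N c d : ℤ) :
    (rho t n N c d).det = n * N ^ 2 * c ^ 2 + t * N * c * d + d ^ 2 := by
  simp only [rho, Matrix.det_fin_two_of]
  ring

namespace Matrix

variable {m : Type*} [Fintype m] [DecidableEq m]

lemma trace_eq_zero_of_sq_eq_zero {R : Type*} [CommRing R] [IsReduced R] {A : Matrix m m R}
    (h : A ^ 2 = 0) : A.trace = 0 :=
  (isNilpotent_trace_of_isNilpotent ⟨2, h⟩).eq_zero

lemma det_eq_zero_of_sq_eq_zero [Nonempty m] {R : Type*} [CommRing R] [IsDomain R]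
    {A : Matrix m m R} (h : A ^ 2 = 0) : A.det = 0 :=
  pow_eq_zero_iff two_ne_zero |>.mp (by rw [← det_pow, h, det_zero])

lemma prime_dvd_trace_and_det_of_map_sq_eq_zero [Nonempty m] {A : Matrix m m ℤ} {q : ℕ}
    [Fact q.Prime] (h : (A ^ 2).map (Int.cast : ℤ → ZMod q) = 0) :
    (q : ℤ) ∣ A.trace ∧ (q : ℤ) ∣ A.det := by
  have hsq : (A.map (Int.castRingHom (ZMod q))) ^ 2 = 0 := by rw [← Matrix.map_pow]; exact h
  simp only [← ZMod.intCast_zmod_eq_zero_iff_dvd]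
  constructor
  · rw [← eq_intCast (Int.castRingHom (ZMod q)), AddMonoidHom.map_trace]
    exact trace_eq_zero_of_sq_eq_zero hsq
  · rw [← eq_intCast (Int.castRingHom (ZMod q)), RingHom.map_det]
    exact det_eq_zero_of_sq_eq_zero hsq

lemma gcd_entries_eq_one_of_map_ne_zero (A : Matrix (Fin 2) (Fin 2) ℤ)
    (h : ∀ q : ℕ, q.Prime → A.map (Int.cast : ℤ → ZMod q) ≠ 0) :
    Int.gcd (Int.gcd (A 0 0) (A 0 1)) (Int.gcd (A 1 0) (A 1 1)) = 1 := by
  refine Nat.eq_one_iff_not_exists_prime_dvd.mpr fun q hq hdvd => h q hq ?_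
  have hrow₀ := Int.natCast_dvd_natCast.mpr (hdvd.trans (Nat.gcd_dvd_left _ _))
  have hrow₁ := Int.natCast_dvd_natCast.mpr (hdvd.trans (Nat.gcd_dvd_right _ _))
  ext i j
  rw [map_apply, zero_apply, ZMod.intCast_zmod_eq_zero_iff_dvd]
  fin_cases i <;> fin_cases j
  · exact hrow₀.trans (Int.gcd_dvd_left _ _)
  · exact hrow₀.trans (Int.gcd_dvd_right _ _)
  · exact hrow₁.trans (Int.gcd_dvd_left _ _)
  · exact hrow₁.trans (Int.gcd_dvd_right _ _)

end Matrix

lemma Prime.not_dvd_of_mul_sq_add_mul_mul_add_sq_eq {p a b x y : ℤ} (hp : Prime p)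
    (h : a * x ^ 2 + b * x * y + y ^ 2 = p) : ¬ p ∣ x := by
  rintro ⟨k, rfl⟩
  obtain ⟨l, rfl⟩ : p ∣ y :=
    hp.dvd_of_dvd_pow (n := 2) ⟨1 - a * p * k ^ 2 - b * k * y, by linear_combination h⟩
  refine hp.not_isUnit (isUnit_of_dvd_one ⟨a * k ^ 2 + b * k * l + l ^ 2, ?_⟩)
  refine mul_left_cancel₀ hp.ne_zero ?_
  linear_combination -h

lemma not_dvd_trace_rho {t n N c d p : ℤ} (hp : Prime p)
    (hrep : n * N ^ 2 * c ^ 2 + t * N * c * d + d ^ 2 = p) (hpN : ¬ p ∣ N)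
    (hpdisc : ¬ p ∣ (t ^ 2 - 4 * n)) : ¬ p ∣ c * N * t + 2 * d := by
  intro htr
  have hdisc : (t ^ 2 - 4 * n) * (N * c) ^ 2 = (c * N * t + 2 * d) ^ 2 - p * 4 := by
    linear_combination -4 * hrep
  have hNc : p ∣ N * c := by
    refine hp.dvd_of_dvd_pow (n := 2) ((hp.dvd_mul.mp ?_).resolve_left hpdisc)
    rw [hdisc]
    exact dvd_sub (dvd_pow htr two_ne_zero) (dvd_mul_right p 4)
  have hc : ¬ p ∣ c :=
    hp.not_dvd_of_mul_sq_add_mul_mul_add_sq_eq (a := n * N ^ 2) (b := t * N) (y := d)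
      (by linear_combination hrep)
  exact (hp.dvd_mul.mp hNc).elim hpN hc

theorem stmt1_general (t n N c d : ℤ) (p : ℤ) (hp : Prime p)
    (hrep : n * N ^ 2 * c ^ 2 + t * N * c * d + d ^ 2 = p)
    (hpN : ¬ p ∣ N)
    (hpdisc : ¬ p ∣ (t ^ 2 - 4 * n)) :
    Int.gcd (Int.gcd (((rho t n N c d) ^ 2) 0 0) (((rho t n N c d) ^ 2) 0 1))
      (Int.gcd (((rho t n N c d) ^ 2) 1 0) (((rho t n N c d) ^ 2) 1 1)) = 1 := by
  refine Matrix.gcd_entries_eq_one_of_map_ne_zero _ fun q hq hsq => ?_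
  have := Fact.mk hq
  obtain ⟨hq_tr, hq_det⟩ := Matrix.prime_dvd_trace_and_det_of_map_sq_eq_zero hsq
  rw [trace_rho] at hq_tr
  rw [det_rho, hrep] at hq_det
  have hpq : p ∣ q := (Nat.prime_iff_prime_int.mp hq |>.associated_of_dvd hp hq_det).dvd'
  exact not_dvd_trace_rho hp hrep hpN hpdisc (hpq.trans hq_tr)

theorem stmt1 (t n N c d : ℤ) (hN : 1 ≤ N) (p : ℤ) (hp : Prime p)
    (hrep : n * N ^ 2 * c ^ 2 + t * N * c * d + d ^ 2 = p)
    (hp2 : p ≠ 2) (hpN : ¬ p ∣ N) (hpt : ¬ p ∣ t)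
    (hpdisc : ¬ p ∣ (t ^ 2 - 4 * n)) :
    Int.gcd (Int.gcd (((rho t n N c d) ^ 2) 0 0) (((rho t n N c d) ^ 2) 0 1))
      (Int.gcd (((rho t n N c d) ^ 2) 1 0) (((rho t n N c d) ^ 2) 1 1)) = 1 :=
  stmt1_general t n N c d p hp hrep hpN hpdisc
end

section
/- Let R be a subring of ℂ and let f = q^{-1} + Σ_{m≥1} a_m q^m be a formal Laurent series over ℂ all of whose coefficients a_m lie in R. If P is a polynomial over ℂ such that every coefficient of the Laurent series P(f) lies in R, then every coefficient of P lies in R. -/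
/-!
Since `f = q⁻¹ + O(q)`, each power `fⁿ` is `q⁻ⁿ + (higher terms)`, so the coefficient of
`q^(-deg P)` in `P(f)` is the leading coefficient of `P`. Hence that coefficient lies in `R`;
subtracting the leading monomial keeps `P(f)` inside the ring of series with coefficients in `R`,
and induction on the number of monomials of `P` finishes the proof.
-/

open Polynomial

namespace HahnSeries

variable {Γ A : Type*}

def coeffSubring [AddCommMonoid Γ] [PartialOrder Γ] [IsOrderedCancelAddMonoid Γ] [CommRing A]
    (R : Subring A) : Subring (HahnSeries Γ A) where
  carrier := {x | ∀ g, x.coeff g ∈ R}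
  zero_mem' _ := zero_mem R
  one_mem' g := by
    rw [coeff_one]
    split_ifs
    exacts [one_mem R, zero_mem R]
  add_mem' hx hy g := add_mem (hx g) (hy g)
  neg_mem' hx g := neg_mem (hx g)
  mul_mem' hx hy g := by
    rw [coeff_mul]
    exact sum_mem fun ij _ ↦ mul_mem (hx ij.1) (hy ij.2)

theorem leadingCoeff_pow_of_leadingCoeff_eq_one [AddCommMonoid Γ] [LinearOrder Γ]
    [IsOrderedCancelAddMonoid Γ] [Semiring A] [Nontrivial A] {x : HahnSeries Γ A}
    (hx : x.leadingCoeff = 1) (n : ℕ) :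
    (x ^ n).leadingCoeff = 1 ∧ (x ^ n).order = n • x.order := by
  induction n with
  | zero => exact ⟨leadingCoeff_one, by rw [pow_zero, order_one, zero_smul]⟩
  | succ n ih =>
    have hne : (x ^ n).leadingCoeff * x.leadingCoeff ≠ 0 := by simp [ih.1, hx]
    rw [pow_succ, leadingCoeff_mul_of_ne_zero hne, order_mul_of_ne_zero hne, ih.1, hx, ih.2,
      succ_nsmul, one_mul]
    exact ⟨rfl, rfl⟩

end HahnSeries

namespace LaurentSeries

open HahnSeries

variable {A : Type*} [CommRing A]

theorem coeff_algebraMap_mul (c : A) (y : LaurentSeries A) (k : ℤ) :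
    (algebraMap A (LaurentSeries A) c * y).coeff k = c * y.coeff k := by
  rw [algebraMap_apply', ← PowerSeries.C_eq_algebraMap, ofPowerSeries_C, C_apply,
    coeff_single_zero_mul]

theorem algebraMap_mul_mem_coeffSubring {R : Subring A} {c : A} (hc : c ∈ R) {y : LaurentSeries A}
    (hy : y ∈ coeffSubring R) : algebraMap A (LaurentSeries A) c * y ∈ coeffSubring R :=
  fun k ↦ by
    rw [coeff_algebraMap_mul]
    exact mul_mem hc (hy k)

variable [Nontrivial A] {f : LaurentSeries A}

theorem coeff_aeval_neg_natDegree (hord : f.order = -1) (hlead : f.leadingCoeff = 1)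
    (P : A[X]) : (aeval f P).coeff (-P.natDegree) = P.leadingCoeff := by
  have hpow := leadingCoeff_pow_of_leadingCoeff_eq_one hlead
  have hlow (i : ℕ) (hi : i < P.natDegree) : (f ^ i).coeff (-P.natDegree) = 0 :=
    coeff_eq_zero_of_lt_order (by rw [(hpow i).2, hord]; simp; omega)
  have htop : (f ^ P.natDegree).coeff (-P.natDegree) = 1 := by
    simpa [leadingCoeff_eq, (hpow _).2, hord] using (hpow P.natDegree).1
  rw [aeval_def, eval₂_eq_sum_range, Finset.sum_range_succ]
  simp only [HahnSeries.coeff_add, HahnSeries.coeff_sum, coeff_algebraMap_mul, htop, mul_one,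
    coeff_natDegree, add_eq_right]
  exact Finset.sum_eq_zero fun i hi ↦ by rw [hlow i (Finset.mem_range.mp hi), mul_zero]

theorem coeff_mem_of_aeval_mem_coeffSubring {R : Subring A} (hord : f.order = -1)
    (hlead : f.leadingCoeff = 1) (hf : f ∈ coeffSubring R) (P : A[X])
    (hP : aeval f P ∈ coeffSubring R) (i : ℕ) : P.coeff i ∈ R := by
  induction hcard : P.support.card generalizing P with
  | zero =>
    rw [support_eq_empty.mp (Finset.card_eq_zero.mp hcard), Polynomial.coeff_zero]
    exact zero_mem R
  | succ n ih =>
    have hlc : P.leadingCoeff ∈ R := coeff_aeval_neg_natDegree hord hlead P ▸ hP _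
    have hsplit := P.eraseLead_add_monomial_natDegree_leadingCoeff
    have herase : P.eraseLead.coeff i ∈ R := by
      refine ih P.eraseLead ?_ (by rw [card_support_eraseLead, hcard, Nat.add_sub_cancel])
      rw [← hsplit, map_add, aeval_monomial] at hP
      simpa only [add_sub_cancel_right] using
        sub_mem hP (algebraMap_mul_mem_coeffSubring hlc (pow_mem hf P.natDegree))
    rw [← hsplit, Polynomial.coeff_add, coeff_monomial]
    split_ifs
    exacts [add_mem herase hlc, by simpa using herase]

end LaurentSeries

theorem stmt8 (R : Subring ℂ) (f : LaurentSeries ℂ)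
    (hf1 : f.coeff (-1) = 1) (hf0 : f.coeff 0 = 0)
    (hfneg : ∀ k : ℤ, k < -1 → f.coeff k = 0)
    (hfR : ∀ m : ℤ, 1 ≤ m → f.coeff m ∈ R)
    (P : Polynomial ℂ)
    (hPf : ∀ k : ℤ, (Polynomial.aeval f P).coeff k ∈ R) :
    ∀ i : ℕ, P.coeff i ∈ R := by
  have hne : f ≠ 0 := HahnSeries.ne_zero_of_coeff_ne_zero (g := -1) (by simp [hf1])
  have hord : f.order = -1 := le_antisymm (HahnSeries.order_le_of_coeff_ne_zero (by simp [hf1]))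
    ((HahnSeries.le_order_iff_forall hne).2 hfneg)
  have hlead : f.leadingCoeff = 1 := by rw [HahnSeries.leadingCoeff_eq, hord, hf1]
  have hfmem : f ∈ HahnSeries.coeffSubring R := fun k ↦ by
    rcases lt_trichotomy k (-1) with hk | rfl | hk
    · simp [hfneg k hk]
    · simp [hf1]
    · obtain rfl | hk := (show 0 ≤ k by omega).eq_or_lt
      · simp [hf0]
      · exact hfR k hk
  exact LaurentSeries.coeff_mem_of_aeval_mem_coeffSubring hord hlead hfmem P hPf
end

section
/- Let f = q^{-1} + Σ_{m≥1} a_m q^m be a formal Laurent series over ℂ, and for each n ≥ 1 let P_{n,f} be its n-th Faber polynomial, and define complex numbers h_{m,n} for m, n ≥ 1 by the expansion P_{n,f}(f) = q^{-n} + n·Σ_{m≥1} h_{m,n} q^m. Then the double sequence is symmetric: h_{m,n} = h_{n,m} for all integers m, n ≥ 1. -/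
/-!
Write `A = P_n(f)`, `B = P_m(f)` and `θ = q d/dq`. As `A` and `B` have no coefficients in degrees
`≤ 0` other than `q^{-n}` and `q^{-m}`, the constant term of `A · θB` is
`n · [q^n]B - m · [q^m]A = n m (h_{n,m} - h_{m,n})`. On the other hand `A · θB = G(f) · θf` with
`G = P_n P_m'`, and this is `θ(H(f))` for an antiderivative `H` of `G`, whose constant term is `0`.
-/

/-- `IsFaberPoly f n P` : `P` is the `n`-th Faber polynomial of
`f = q⁻¹ + Σ_{m≥1} a_m qᵐ`, i.e. `P` is monic of degree `n` and
`P(f) = q⁻ⁿ + O(q)`. -/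
def IsFaberPoly (f : LaurentSeries ℂ) (n : ℕ) (P : Polynomial ℂ) : Prop :=
  P.Monic ∧ P.natDegree = n ∧
    (∀ k : ℤ, k ≤ 0 → k ≠ -(n : ℤ) → (Polynomial.aeval f P).coeff k = 0) ∧
    (Polynomial.aeval f P).coeff (-(n : ℤ)) = 1

open Polynomial

theorem Polynomial.exists_derivative_eq {K : Type*} [Field K] [CharZero K] (Q : K[X]) :
    ∃ P : K[X], derivative P = Q := by
  induction Q using Polynomial.induction_on' with
  | add p q hp hq =>
    obtain ⟨P, rfl⟩ := hp
    obtain ⟨P', rfl⟩ := hq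
    exact ⟨P + P', derivative_add⟩
  | monomial n a =>
    refine ⟨monomial (n + 1) (a / (n + 1)), ?_⟩
    rw [derivative_monomial, Nat.add_sub_cancel, Nat.cast_add_one,
      div_mul_cancel₀ a (Nat.cast_add_one_ne_zero n)]

namespace LaurentSeries

section Semiring

variable {R : Type*} [Semiring R]

theorem coeff_zero_mul_eq_add {x y : LaurentSeries R} {m n : ℕ} (hm : m ≠ 0)
    (hx : ∀ k ≤ 0, k ≠ -(n : ℤ) → x.coeff k = 0) (hy : ∀ k ≤ 0, k ≠ -(m : ℤ) → y.coeff k = 0) :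
    (x * y).coeff 0 = x.coeff (-n) * y.coeff n + x.coeff m * y.coeff (-m) := by
  have h_notMem : ∀ p : ℤ × ℤ, p.1 + p.2 = 0 →
      p ∉ Finset.antidiagonal x.isPWO_support y.isPWO_support 0 →
      x.coeff p.1 * y.coeff p.2 = 0 := by
    intro p hp hnot
    by_contra hne
    exact hnot (Finset.mem_antidiagonal.2
      ⟨left_ne_zero_of_mul hne, right_ne_zero_of_mul hne, hp⟩)
  rw [HahnSeries.coeff_mul]
  refine Finset.sum_eq_add (-(n : ℤ), (n : ℤ)) ((m : ℤ), -(m : ℤ))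
    (by simp [Prod.ext_iff]; omega) ?_ (h_notMem _ (by simp)) (h_notMem _ (by simp))
  rintro ⟨i, j⟩ hij ⟨hia, hib⟩
  have hsum : i + j = 0 := (Finset.mem_antidiagonal.1 hij).2.2
  simp only [ne_eq, Prod.mk.injEq, not_and] at hia hib
  rcases le_or_gt i 0 with hi | hi
  · rw [hx i hi (fun h => hia h (by omega)), zero_mul]
  · rw [hy j (by omega) (fun h => hib (by omega) h), mul_zero]

end Semiring

section CommRing

variable {R : Type*} [CommRing R]

theorem coeff_algebraMap_mul_s9 (r : R) (x : LaurentSeries R) (k : ℤ) :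
    (algebraMap R (LaurentSeries R) r * x).coeff k = r * x.coeff k := by
  rw [HahnSeries.algebraMap_apply', PowerSeries.algebraMap_apply, HahnSeries.ofPowerSeries_C,
    Algebra.algebraMap_self_apply, HahnSeries.C_mul_eq_smul, HahnSeries.coeff_smul, smul_eq_mul]

def eulerOperator (x : LaurentSeries R) : LaurentSeries R where
  coeff k := k * x.coeff k
  isPWO_support' := x.isPWO_support.mono fun k hk hx => hk (by simp [hx])

@[simp] theorem coeff_eulerOperator (x : LaurentSeries R) (k : ℤ) :
    (eulerOperator x).coeff k = k * x.coeff k := rfl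

theorem support_eulerOperator_subset (x : LaurentSeries R) :
    (eulerOperator x).support ⊆ x.support :=
  fun k hk hx => hk (by simp [hx])

theorem eulerOperator_mul (x y : LaurentSeries R) :
    eulerOperator (x * y) = x * eulerOperator y + eulerOperator x * y := by
  ext k
  rw [HahnSeries.coeff_add, coeff_eulerOperator, HahnSeries.coeff_mul, Finset.mul_sum,
    HahnSeries.coeff_mul_right' y.isPWO_support (support_eulerOperator_subset y),
    HahnSeries.coeff_mul_left' x.isPWO_support (support_eulerOperator_subset x),
    ← Finset.sum_add_distrib]
  refine Finset.sum_congr rfl fun ij hij => ?_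
  have hk : ((ij.1 + ij.2 : ℤ) : R) = k := congrArg _ (Finset.mem_antidiagonal.1 hij).2.2
  simp only [coeff_eulerOperator, ← hk, Int.cast_add]
  ring

noncomputable def eulerDerivation : Derivation R (LaurentSeries R) (LaurentSeries R) where
  toFun := eulerOperator
  map_add' x y := by ext k; exact mul_add ..
  map_smul' r x := by
    -- the `R`-algebra structure comes from `PowerSeries R`, so `r • x` is `C r * x` here
    ext k
    simp only [Algebra.smul_def, RingHom.id_apply, HahnSeries.coeff_smul, coeff_eulerOperator]
    rw [coeff_algebraMap_mul_s9, Algebra.algebraMap_self_apply, mul_left_comm]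
  map_one_eq_zero' := by ext k; by_cases hk : k = 0 <;> simp [HahnSeries.coeff_one, hk]
  leibniz' x y := by
    change eulerOperator (x * y) = x * eulerOperator y + y * eulerOperator x
    rw [eulerOperator_mul, mul_comm y]

theorem eulerDerivation_apply (x : LaurentSeries R) : eulerDerivation x = eulerOperator x := rfl

theorem coeff_zero_eulerOperator (x : LaurentSeries R) : (eulerOperator x).coeff 0 = 0 := by
  simp

end CommRing

section Field

variable {K : Type*} [Field K] [CharZero K]

theorem coeff_zero_aeval_mul_eulerOperator_aeval (f : LaurentSeries K) (P Q : K[X]) :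
    (aeval f P * eulerOperator (aeval f Q)).coeff 0 = 0 := by
  obtain ⟨F, hF⟩ := exists_derivative_eq (P * Polynomial.derivative Q)
  have h_exact : aeval f P * eulerOperator (aeval f Q) = eulerOperator (aeval f F) := by
    simp only [← eulerDerivation_apply, Derivation.map_aeval, hF, map_mul, smul_eq_mul, mul_assoc]
  rw [h_exact, coeff_zero_eulerOperator]

end Field

end LaurentSeries

theorem stmt9_general (f : LaurentSeries ℂ)
    (m n : ℕ) (hm : 1 ≤ m) (hn : 1 ≤ n)
    (Pm Pn : Polynomial ℂ)
    (hPm : IsFaberPoly f m Pm) (hPn : IsFaberPoly f n Pn)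
    (hmn hnm : ℂ)
    (hdefmn : (Polynomial.aeval f Pn).coeff (m : ℤ) = (n : ℂ) * hmn)
    (hdefnm : (Polynomial.aeval f Pm).coeff (n : ℤ) = (m : ℂ) * hnm) :
    hmn = hnm := by
  obtain ⟨-, -, hPn_zero, hPn_lead⟩ := hPn
  obtain ⟨-, -, hPm_zero, hPm_lead⟩ := hPm
  have hres := LaurentSeries.coeff_zero_aeval_mul_eulerOperator_aeval f Pn Pm
  rw [LaurentSeries.coeff_zero_mul_eq_add (m := m) (by omega) hPn_zero fun k hk hkm => by
    rw [LaurentSeries.coeff_eulerOperator, hPm_zero k hk hkm, mul_zero]] at hres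
  simp only [LaurentSeries.coeff_eulerOperator, hPn_lead, hdefmn, hdefnm, hPm_lead] at hres
  push_cast at hres
  have hnm0 : (n : ℂ) * m ≠ 0 :=
    mul_ne_zero (Nat.cast_ne_zero.2 (by omega)) (Nat.cast_ne_zero.2 (by omega))
  exact mul_left_cancel₀ hnm0 (by linear_combination -hres)

theorem stmt9 (f : LaurentSeries ℂ)
    (hf1 : f.coeff (-1) = 1) (hf0 : f.coeff 0 = 0)
    (hfneg : ∀ k : ℤ, k < -1 → f.coeff k = 0)
    (m n : ℕ) (hm : 1 ≤ m) (hn : 1 ≤ n)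
    (Pm Pn : Polynomial ℂ)
    (hPm : IsFaberPoly f m Pm) (hPn : IsFaberPoly f n Pn)
    (hmn hnm : ℂ)
    (hdefmn : (Polynomial.aeval f Pn).coeff (m : ℤ) = (n : ℂ) * hmn)
    (hdefnm : (Polynomial.aeval f Pm).coeff (n : ℤ) = (m : ℂ) * hnm) :
    hmn = hnm :=
  stmt9_general f m n hm hn Pm Pn hPm hPn hmn hnm hdefmn hdefnm
end

section
/- Let f = q^{-1} + Σ_{m≥1} a_m q^m be a formal Laurent series over ℂ, with Faber polynomials P_{n,f} and associated double sequence h_{m,n} defined by P_{n,f}(f) = q^{-n} + n·Σ_{m≥1} h_{m,n} q^m. Then f is replicable (i.e. h_{m,n} = h_{r,s} whenever gcd(m,n) = gcd(r,s) and lcm(m,n) = lcm(r,s)) if and only if there exists a family of formal series f^{(a)} = q^{-1} + Σ_{m≥1} c^{(a)}_m q^m, one for each integer a ≥ 1, with f^{(1)} = f, such that for every n ≥ 1 the identity P_{n,f}(f) = Σ_{ad=n, 0≤b<d} f^{(a)}(ζ_d^b q^{a/d}) holds in the ring of generalized power series with rational exponents and complex coefficients, where the inner sum is over all factorizations n = ad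 with a,d ≥ 1 and integers 0 ≤ b < d. -/
/-- `StdForm g` : `g = q⁻¹ + Σ_{m≥1} c_m qᵐ`, i.e. the coefficient of `q⁻¹` is `1`,
the constant term is `0`, and all coefficients below `q⁻¹` vanish. -/
def StdForm (g : LaurentSeries ℂ) : Prop :=
  g.coeff (-1) = 1 ∧ g.coeff 0 = 0 ∧ ∀ k : ℤ, k < -1 → g.coeff k = 0

/-- `ζ_d = e^{2πi/d}`. -/
noncomputable def zetaC (d : ℕ) : ℂ := Complex.exp (2 * Real.pi * Complex.I / d)

/-
Averaging over `b` kills the terms of `F a (ζ_d^b q^{a/d})` with non-integral exponent and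
multiplies the others by `d`. The exponents `≤ 0` then match automatically, and comparing the
coefficients of `q^m`, `m ≥ 1`, turns the identity for `P_{n,f}(f)` into
  `h_{m,n} = Σ_{a ∣ gcd(m,n)} a⁻¹ c^{(a)}_{mn/a²}`.
The right-hand side depends only on `gcd(m,n)` and `mn`, hence only on the gcd and the lcm.
Conversely, choosing the `c^{(a)}` by Möbius inversion makes the right-hand side equal to
`h_{lcm(m,n), gcd(m,n)}`, which is `h_{m,n}` when `f` is replicable.
-/

open Finset Polynomial ArithmeticFunction

open scoped ArithmeticFunction.Moebius

lemma finsum_ite_apply_eq_apply {α β M : Type*} [AddCommMonoid M] [DecidableEq β] {φ : α → β}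
    (hφ : Function.Injective φ) (v : α → M) (x : α) :
    (∑ᶠ y, if φ x = φ y then v y else 0) = v x := by
  rw [finsum_eq_single _ x fun y hy => if_neg (hφ.ne hy.symm), if_pos rfl]

lemma forall_finsum_ite_intCast_eq_iff {M : Type*} [AddCommMonoid M] (L : ℤ → M) (R : ℚ → M)
    (hR : ∀ r : ℚ, (∀ k : ℤ, r ≠ k) → R r = 0) :
    (∀ r : ℚ, (∑ᶠ k : ℤ, if r = k then L k else 0) = R r) ↔ ∀ k : ℤ, L k = R k := by
  have hL (k : ℤ) : (∑ᶠ j : ℤ, if (k : ℚ) = j then L j else 0) = L k :=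
    finsum_ite_apply_eq_apply Int.cast_injective L k
  refine ⟨fun H k => (hL k).symm.trans (H k), fun H r => ?_⟩
  by_cases hr : ∃ k : ℤ, r = k
  · obtain ⟨k, rfl⟩ := hr
    rw [hL, H]
  · push Not at hr
    rw [hR r hr, finsum_eq_zero_of_forall_eq_zero fun k => if_neg (hr k)]

lemma finsum_ite_intCast_eq_mul {M : Type*} [AddCommMonoid M] {a : ℕ} (ha : a ≠ 0) (k : ℤ)
    (v : ℤ → M) :
    (∑ᶠ j : ℤ, if (k : ℚ) = a * j then v j else 0) = if (a : ℤ) ∣ k then v (k / a) else 0 := by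
  split_ifs with hak
  · obtain ⟨j, rfl⟩ := hak
    rw [Int.mul_ediv_cancel_left _ (by exact_mod_cast ha)]
    push_cast
    exact finsum_ite_apply_eq_apply (φ := fun j : ℤ => (a : ℚ) * j)
      (fun x y hxy => by simpa [ha] using hxy) v j
  · exact finsum_eq_zero_of_forall_eq_zero fun j => if_neg fun h => hak ⟨j, by exact_mod_cast h⟩

lemma sum_range_zetaC_zpow {d : ℕ} (hd : d ≠ 0) (m : ℤ) :
    ∑ b ∈ range d, zetaC d ^ ((b : ℤ) * m) = if (d : ℤ) ∣ m then (d : ℂ) else 0 := by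
  have hζ : IsPrimitiveRoot (zetaC d) d := Complex.isPrimitiveRoot_exp d hd
  simp_rw [mul_comm _ m, zpow_mul, zpow_natCast]
  split_ifs with hdm
  · simp [(hζ.zpow_eq_one_iff_dvd m).2 hdm]
  · have hne : zetaC d ^ m - 1 ≠ 0 := sub_ne_zero.2 fun h => hdm ((hζ.zpow_eq_one_iff_dvd m).1 h)
    have hd1 : (zetaC d ^ m) ^ d = 1 := by
      rw [← zpow_natCast, ← zpow_mul, hζ.zpow_eq_one_iff_dvd]
      exact dvd_mul_left _ _
    apply mul_left_cancel₀ hne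
    rw [mul_geom_sum, hd1, sub_self, mul_zero]

/-- The coefficient of `q^r` in `Σ_{0 ≤ b < d} g(ζ_d^b q^{a/d})`, with `c` the coefficients
of `g`: only the exponents `am/d` with `d ∣ m` survive. -/
lemma sum_range_finsum_zetaC (c : ℤ → ℂ) {a d : ℕ} (ha : a ≠ 0) (hd : d ≠ 0) (r : ℚ) :
    ∑ b ∈ range d, ∑ᶠ m : ℤ, (if r = (a : ℚ) * m / d then zetaC d ^ ((b : ℤ) * m) * c m else 0)
      = ∑ᶠ j : ℤ, if r = (a : ℚ) * j then (d : ℂ) * c (j * d) else 0 := by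
  have hφ : Function.Injective fun m : ℤ => (a : ℚ) * m / d := fun x y hxy => by
    simpa [ha, hd] using hxy
  have hψ : Function.Injective fun j : ℤ => (a : ℚ) * j := fun x y hxy => by simpa [ha] using hxy
  by_cases hr : ∃ m₀ : ℤ, r = a * m₀ / d
  · obtain ⟨m₀, rfl⟩ := hr
    rw [sum_congr rfl fun (b : ℕ) _ =>
        finsum_ite_apply_eq_apply hφ (fun m => zetaC d ^ ((b : ℤ) * m) * c m) m₀,
      ← sum_mul, sum_range_zetaC_zpow hd]
    split_ifs with hdm
    · obtain ⟨j₀, rfl⟩ := hdm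
      have hr : (a : ℚ) * ((d * j₀ : ℤ) : ℚ) / d = a * j₀ := by push_cast; field_simp
      rw [hr, finsum_ite_apply_eq_apply hψ (fun j => (d : ℂ) * c (j * d)) j₀, mul_comm (d : ℤ)]
    · rw [zero_mul, eq_comm]
      refine finsum_eq_zero_of_forall_eq_zero fun j => if_neg fun h => hdm ⟨j, ?_⟩
      rw [mul_comm]
      exact hφ (h.trans (by push_cast; field_simp))
  · push Not at hr
    rw [sum_eq_zero fun b _ => finsum_eq_zero_of_forall_eq_zero fun m => if_neg (hr m)]
    symm
    refine finsum_eq_zero_of_forall_eq_zero fun j => if_neg fun h => hr (j * d) ?_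
    rw [h]
    push_cast
    field_simp

/-- The coefficient of `q^r` in `Σ_{ad=n, 0 ≤ b < d} F a (ζ_d^b q^{a/d})`, after the sum
over `b`. -/
noncomputable def replicateExpansionCoeff (F : ℕ → LaurentSeries ℂ) (n : ℕ) (r : ℚ) : ℂ :=
  ∑ a ∈ n.divisors, ∑ᶠ j : ℤ,
    if r = (a : ℚ) * j then ((n / a : ℕ) : ℂ) * (F a).coeff (j * (n / a : ℕ)) else 0

lemma sum_divisors_sum_range_finsum_zetaC (F : ℕ → LaurentSeries ℂ) (n : ℕ) (r : ℚ) :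
    ∑ d ∈ n.divisors, ∑ b ∈ range d, ∑ᶠ m : ℤ,
        (if r = ((n / d : ℕ) : ℚ) * (m : ℚ) / (d : ℚ)
          then zetaC d ^ ((b : ℤ) * m) * (F (n / d)).coeff m else 0)
      = replicateExpansionCoeff F n r := by
  rw [replicateExpansionCoeff, eq_comm, ← Nat.sum_div_divisors]
  refine sum_congr rfl fun d hd => ?_
  have hdn := Nat.dvd_of_mem_divisors hd
  have hn := Nat.ne_zero_of_mem_divisors hd
  rw [Nat.div_div_self hdn hn, sum_range_finsum_zetaC _ ((Nat.div_ne_zero_iff_of_dvd hdn).2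
    ⟨hn, (Nat.pos_of_mem_divisors hd).ne'⟩) (Nat.pos_of_mem_divisors hd).ne']

lemma replicateExpansionCoeff_eq_zero (F : ℕ → LaurentSeries ℂ) (n : ℕ) {r : ℚ}
    (hr : ∀ k : ℤ, r ≠ k) : replicateExpansionCoeff F n r = 0 :=
  sum_eq_zero fun a _ => finsum_eq_zero_of_forall_eq_zero fun j =>
    if_neg fun h => hr (a * j) (by rw [h]; push_cast; rfl)

lemma replicateExpansionCoeff_intCast (F : ℕ → LaurentSeries ℂ) (n : ℕ) (k : ℤ) :
    replicateExpansionCoeff F n k = ∑ a ∈ n.divisors,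
      if (a : ℤ) ∣ k then ((n / a : ℕ) : ℂ) * (F a).coeff (k / a * (n / a : ℕ)) else 0 :=
  sum_congr rfl fun a ha =>
    finsum_ite_intCast_eq_mul (Nat.pos_of_mem_divisors ha).ne' k
      fun j => ((n / a : ℕ) : ℂ) * (F a).coeff (j * (n / a : ℕ))

noncomputable def replicateSum (F : ℕ → LaurentSeries ℂ) (g N : ℕ) : ℂ :=
  ∑ a ∈ g.divisors, (a : ℂ)⁻¹ * (F a).coeff (N / (a * a) : ℕ)

lemma divisors_gcd_eq_filter {m n : ℕ} (hn : n ≠ 0) :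
    (m.gcd n).divisors = {a ∈ n.divisors | a ∣ m} := by
  ext a
  simp only [Nat.mem_divisors, mem_filter, Nat.dvd_gcd_iff, ne_eq, Nat.gcd_eq_zero_iff, hn]
  tauto

lemma replicateExpansionCoeff_natCast (F : ℕ → LaurentSeries ℂ) {n : ℕ} (hn : n ≠ 0) (m : ℕ) :
    replicateExpansionCoeff F n ((m : ℤ) : ℚ) = n * replicateSum F (m.gcd n) (m * n) := by
  rw [replicateExpansionCoeff_intCast, replicateSum, mul_sum, divisors_gcd_eq_filter hn, sum_filter]
  refine sum_congr rfl fun a ha => ?_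
  have han := Nat.dvd_of_mem_divisors ha
  have ha0 : (a : ℂ) ≠ 0 := by exact_mod_cast (Nat.pos_of_mem_divisors ha).ne'
  simp only [Int.natCast_dvd_natCast]
  split_ifs with ham
  · rw [← Int.natCast_div, ← Nat.cast_mul, Nat.div_mul_div_comm ham han, Nat.cast_div han ha0]
    field_simp
  · rfl

lemma StdForm.coeff_of_nonpos {g : LaurentSeries ℂ} (hg : StdForm g) {k : ℤ} (hk : k ≤ 0) :
    g.coeff k = if k = -1 then 1 else 0 := by
  obtain ⟨h1, h0, hlt⟩ := hg
  split_ifs with hk1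
  · rw [hk1, h1]
  · rcases hk.lt_or_eq with hk' | rfl
    · exact hlt k (by omega)
    · exact h0

lemma replicateExpansionCoeff_of_nonpos {F : ℕ → LaurentSeries ℂ}
    (hF : ∀ a : ℕ, 1 ≤ a → StdForm (F a)) {n : ℕ} (hn : n ≠ 0) {k : ℤ} (hk : k ≤ 0) :
    replicateExpansionCoeff F n k = if k = -n then 1 else 0 := by
  rw [replicateExpansionCoeff_intCast, sum_eq_single n]
  · rw [Nat.div_self (Nat.pos_of_ne_zero hn), Nat.cast_one, one_mul, Nat.cast_one, mul_one]
    by_cases hnk : (n : ℤ) ∣ k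
    · obtain ⟨j, rfl⟩ := hnk
      have hn0 : (0 : ℤ) < n := by exact_mod_cast Nat.pos_of_ne_zero hn
      have hj : j ≤ 0 := Int.nonpos_of_mul_nonpos_right hk hn0
      rw [if_pos ⟨j, rfl⟩, Int.mul_ediv_cancel_left _ (by exact_mod_cast hn),
        (hF n (by omega)).coeff_of_nonpos hj]
      rw [show -(n : ℤ) = n * -1 by ring]
      simp only [mul_right_inj' hn0.ne']
    · rw [if_neg hnk, if_neg fun h => hnk ⟨-1, by rw [h]; ring⟩]
  · intro a ha hne
    have han := Nat.dvd_of_mem_divisors ha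
    have ha0 := (Nat.pos_of_mem_divisors ha)
    split_ifs with hak
    · obtain ⟨j, rfl⟩ := hak
      have hj : j ≤ 0 := Int.nonpos_of_mul_nonpos_right hk (by exact_mod_cast ha0)
      rw [Int.mul_ediv_cancel_left _ (by exact_mod_cast ha0.ne'),
        (hF a ha0).coeff_of_nonpos (mul_nonpos_of_nonpos_of_nonneg hj (by positivity)),
        if_neg, mul_zero]
      intro h
      have h1 : ((n / a : ℕ) : ℤ) ∣ 1 := ⟨-j, by linear_combination h⟩
      exact hne (Nat.eq_of_dvd_of_div_eq_one han (Nat.dvd_one.1 (by exact_mod_cast h1)))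
    · rfl
  · exact fun h => (h (Nat.mem_divisors_self n hn)).elim

lemma IsFaberPoly.coeff_of_nonpos {f : LaurentSeries ℂ} {n : ℕ} {P : ℂ[X]}
    (hP : IsFaberPoly f n P) {k : ℤ} (hk : k ≤ 0) :
    (aeval f P).coeff k = if k = -n then 1 else 0 := by
  split_ifs with hkn
  · rw [hkn, hP.2.2.2]
  · exact hP.2.2.1 k hk hkn

lemma IsFaberPoly.coeff_one {f : LaurentSeries ℂ} {P : ℂ[X]} (hP : IsFaberPoly f 1 P) {t : ℕ}
    (ht : t ≠ 0) : (aeval f P).coeff t = f.coeff t := by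
  rw [hP.1.eq_X_add_C hP.2.1, map_add, aeval_X, aeval_C, HahnSeries.coeff_add,
    HahnSeries.algebraMap_apply', LaurentSeries.coeff_coe_powerSeries]
  simp [PowerSeries.coeff_C, ht]

lemma faber_eq_replicateExpansionCoeff_iff {f : LaurentSeries ℂ} {n : ℕ} {P : ℂ[X]}
    {h : ℕ → ℕ → ℂ} {F : ℕ → LaurentSeries ℂ} (hP : IsFaberPoly f n P) (hn : 1 ≤ n)
    (hh : ∀ m : ℕ, 1 ≤ m → (aeval f P).coeff (m : ℤ) = n * h m n)
    (hF : ∀ a : ℕ, 1 ≤ a → StdForm (F a)) :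
    (∀ r : ℚ, (∑ᶠ k : ℤ, if r = k then (aeval f P).coeff k else 0) = replicateExpansionCoeff F n r)
      ↔ ∀ m : ℕ, 1 ≤ m → h m n = replicateSum F (m.gcd n) (m * n) := by
  rw [forall_finsum_ite_intCast_eq_iff _ _ fun r => replicateExpansionCoeff_eq_zero F n]
  have hn0 : (n : ℂ) ≠ 0 := by exact_mod_cast (show n ≠ 0 by omega)
  constructor
  · intro H m hm
    have hcoeff := H m
    rw [hh m hm, replicateExpansionCoeff_natCast F (by omega)] at hcoeff
    exact mul_left_cancel₀ hn0 hcoeff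
  · intro H k
    rcases le_or_gt k 0 with hk | hk
    · rw [hP.coeff_of_nonpos hk, replicateExpansionCoeff_of_nonpos hF (by omega) hk]
    · lift k to ℕ using hk.le
      rw [hh k (by omega), replicateExpansionCoeff_natCast F (by omega), H k (by omega)]

noncomputable def stdFormSeries (c : ℕ → ℂ) : LaurentSeries ℂ :=
  HahnSeries.ofSuppBddBelow (fun k : ℤ => if k = -1 then 1 else if k ≤ 0 then 0 else c k.toNat)
    ⟨-1, fun k hk => by
      by_contra hlt
      exact hk (by simp only; rw [if_neg (by omega), if_pos (by omega)])⟩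

lemma stdFormSeries_coeff (c : ℕ → ℂ) (k : ℤ) :
    (stdFormSeries c).coeff k = if k = -1 then 1 else if k ≤ 0 then 0 else c k.toNat :=
  rfl

lemma stdForm_stdFormSeries (c : ℕ → ℂ) : StdForm (stdFormSeries c) :=
  ⟨by simp [stdFormSeries_coeff], by simp [stdFormSeries_coeff], fun k hk => by
    simp [stdFormSeries_coeff, show k ≠ -1 by omega, show k ≤ 0 by omega]⟩

lemma stdFormSeries_coeff_natCast (c : ℕ → ℂ) {t : ℕ} (ht : t ≠ 0) :
    (stdFormSeries c).coeff t = c t := by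
  rw [stdFormSeries_coeff, if_neg (by omega), if_neg (by omega), Int.toNat_natCast]

lemma StdForm.eq_stdFormSeries {g : LaurentSeries ℂ} (hg : StdForm g) {c : ℕ → ℂ}
    (hc : ∀ t : ℕ, t ≠ 0 → g.coeff t = c t) : g = stdFormSeries c := by
  ext k
  rcases le_or_gt k 0 with hk | hk
  · rw [hg.coeff_of_nonpos hk, (stdForm_stdFormSeries c).coeff_of_nonpos hk]
  · lift k to ℕ using hk.le
    rw [hc k (by omega), stdFormSeries_coeff_natCast c (by omega)]

/-- The coefficient `c^{(a)}_t` obtained by Möbius inversion of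
`Σ_{e ∣ a} e⁻¹ c^{(e)}_{a²t/e²} = h_{at,a}`. -/
noncomputable def replicateCoeff (h : ℕ → ℕ → ℂ) (a t : ℕ) : ℂ :=
  a * ∑ x ∈ a.divisorsAntidiagonal, μ x.1 • h (a * a * t / x.2) x.2

noncomputable def replicates (h : ℕ → ℕ → ℂ) (a : ℕ) : LaurentSeries ℂ :=
  stdFormSeries (replicateCoeff h a)

lemma replicates_one (h : ℕ → ℕ → ℂ) {f : LaurentSeries ℂ} (hf : StdForm f)
    (hcoeff : ∀ t : ℕ, t ≠ 0 → f.coeff t = h t 1) : replicates h 1 = f :=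
  (hf.eq_stdFormSeries fun t ht => by simp [hcoeff t ht, replicateCoeff]).symm

lemma replicateSum_replicates (h : ℕ → ℕ → ℂ) {m n : ℕ} (hm : m ≠ 0) (hn : n ≠ 0) :
    replicateSum (replicates h) (m.gcd n) (m * n) = h (m.lcm n) (m.gcd n) := by
  have hterm : ∀ a ∈ (m.gcd n).divisors, (a : ℂ)⁻¹ * (replicates h a).coeff (m * n / (a * a) : ℕ)
      = ∑ x ∈ a.divisorsAntidiagonal, μ x.1 • h (m * n / x.2) x.2 := by
    intro a ha
    have hag := Nat.dvd_of_mem_divisors ha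
    have ha0 := (Nat.pos_of_mem_divisors ha).ne'
    have hdvd : a * a ∣ m * n :=
      Nat.mul_dvd_mul (hag.trans (Nat.gcd_dvd_left m n)) (hag.trans (Nat.gcd_dvd_right m n))
    have ht : m * n / (a * a) ≠ 0 :=
      (Nat.div_ne_zero_iff_of_dvd hdvd).2 ⟨Nat.mul_ne_zero hm hn, Nat.mul_ne_zero ha0 ha0⟩
    rw [replicates, stdFormSeries_coeff_natCast _ ht, replicateCoeff, Nat.mul_div_cancel' hdvd,
      inv_mul_cancel_left₀ (by exact_mod_cast ha0)]
  rw [replicateSum, sum_congr rfl hterm,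
    sum_eq_iff_sum_smul_moebius_eq (g := fun e => h (m * n / e) e).2 (fun _ _ => rfl) _
      (Nat.gcd_pos_of_pos_left n (Nat.pos_of_ne_zero hm)), Nat.lcm_eq_mul_div]

/- The identity of Hahn series with rational exponents is stated coefficientwise:
`F a (ζ_d^b q^{a/d})` has coefficient `ζ_d^{bm}·(F a).coeff m` at the exponent `am/d`. -/
theorem stmt10 (f : LaurentSeries ℂ) (hf : StdForm f)
    (P : ℕ → Polynomial ℂ) (hP : ∀ n : ℕ, 1 ≤ n → IsFaberPoly f n (P n))
    (h : ℕ → ℕ → ℂ)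
    (hh : ∀ m n : ℕ, 1 ≤ m → 1 ≤ n →
      (Polynomial.aeval f (P n)).coeff (m : ℤ) = (n : ℂ) * h m n) :
    (∀ m n r s : ℕ, 1 ≤ m → 1 ≤ n → 1 ≤ r → 1 ≤ s →
        Nat.gcd m n = Nat.gcd r s → Nat.lcm m n = Nat.lcm r s → h m n = h r s)
      ↔
    (∃ F : ℕ → LaurentSeries ℂ, F 1 = f ∧ (∀ a : ℕ, 1 ≤ a → StdForm (F a)) ∧
      ∀ n : ℕ, 1 ≤ n → ∀ r : ℚ,
        (∑ᶠ k : ℤ, if r = (k : ℚ) then (Polynomial.aeval f (P n)).coeff k else 0)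
          = ∑ d ∈ n.divisors, ∑ b ∈ Finset.range d,
              ∑ᶠ m : ℤ, if r = ((n / d : ℕ) : ℚ) * (m : ℚ) / (d : ℚ)
                then zetaC d ^ ((b : ℤ) * m) * (F (n / d)).coeff m else 0) := by
  simp only [sum_divisors_sum_range_finsum_zetaC]
  have hexp (F : ℕ → LaurentSeries ℂ) (hF : ∀ a : ℕ, 1 ≤ a → StdForm (F a)) (n : ℕ)
      (hn : 1 ≤ n) := faber_eq_replicateExpansionCoeff_iff (hP n hn) hn
    (fun m hm => hh m n hm hn) hF
  constructor
  · intro hrepl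
    have hf1 (t : ℕ) (ht : t ≠ 0) : f.coeff t = h t 1 := by
      rw [← (hP 1 le_rfl).coeff_one ht, hh t 1 (by omega) le_rfl, Nat.cast_one, one_mul]
    have hF (a : ℕ) (_ : 1 ≤ a) : StdForm (replicates h a) := stdForm_stdFormSeries _
    refine ⟨replicates h, replicates_one h hf hf1, hF,
      fun n hn => (hexp _ hF n hn).2 fun m hm => ?_⟩
    have hgl : m.gcd n ∣ m.lcm n := (Nat.gcd_dvd_left m n).trans (Nat.dvd_lcm_left m n)
    rw [replicateSum_replicates h (by omega) (by omega)]
    exact hrepl m n _ _ hm hn (Nat.lcm_pos hm hn) (Nat.gcd_pos_of_pos_left n hm)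
      (Nat.gcd_eq_right hgl).symm (Nat.lcm_eq_left hgl).symm
  · rintro ⟨F, -, hF, hid⟩ m n r s hm hn hr hs hgcd hlcm
    have hsum (m n : ℕ) (hm : 1 ≤ m) (hn : 1 ≤ n) := (hexp F hF n hn).1 (hid n hn) m hm
    rw [hsum m n hm hn, hsum r s hr hs, hgcd, ← Nat.gcd_mul_lcm m n, ← Nat.gcd_mul_lcm r s,
      hgcd, hlcm]
end
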